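/- Let J = T − Σ where T is an entrywise-nonnegative n×n matrix and Σ is a diagonal matrix with strictly positive diagonal entries. Then the maximal real part of the eigenvalues of J is positive if and only if the spectral radius of the next generation matrix G = T Σ⁻¹ exceeds 1: sign(s(J)) = sign(ρ(TΣ⁻¹) − 1), where s(J) = max{Re λ : λ ∈ spectrum(J)}. -/

import Mathlib

open MeasureTheory ProbabilityTheory

noncomputable def specNorm {n : ℕ} (M : Matrix (Fin n) (Fin n) ℝ) : ℝ :=
  ‖Matrix.toEuclideanCLM (𝕜 := ℝ) M‖


noncomputable def specRad {n : ℕ} (M : Matrix (Fin n) (Fin n) ℝ) : ENNReal :=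
  spectralRadius ℂ (M.map (algebraMap ℝ ℂ))

open Matrix Filter Topology
attribute [local instance] Matrix.linftyOpNormedRing Matrix.linftyOpNormedAlgebra
  Matrix.linftyOpNormedAddCommGroup


noncomputable section PF
variable {n : ℕ}

/-- complexification of a real matrix -/
def cm (M : Matrix (Fin n) (Fin n) ℝ) : Matrix (Fin n) (Fin n) ℂ :=
  M.map (algebraMap ℝ ℂ)

lemma cm_eq (M : Matrix (Fin n) (Fin n) ℝ) :
    cm M = (algebraMap ℝ ℂ).mapMatrix M := rfl

lemma cm_mul (A B : Matrix (Fin n) (Fin n) ℝ) : cm (A * B) = cm A * cm B := by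
  simp [cm_eq, _root_.map_mul]

lemma cm_add (A B : Matrix (Fin n) (Fin n) ℝ) : cm (A + B) = cm A + cm B := by
  simp [cm_eq, map_add]

lemma cm_sub (A B : Matrix (Fin n) (Fin n) ℝ) : cm (A - B) = cm A - cm B := by
  simp [cm_eq, map_sub]

lemma cm_one : cm (1 : Matrix (Fin n) (Fin n) ℝ) = 1 := by simp [cm_eq, _root_.map_one]

lemma cm_pow (A : Matrix (Fin n) (Fin n) ℝ) (k : ℕ) : cm (A ^ k) = cm A ^ k := by
  simp [cm_eq, map_pow]

lemma cm_smul (c : ℝ) (A : Matrix (Fin n) (Fin n) ℝ) :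
    cm (c • A) = (c : ℂ) • cm A := by
  ext i j
  simp [cm, Complex.ofReal_mul]

lemma cm_algebraMap (c : ℝ) :
    cm ((c • 1 : Matrix (Fin n) (Fin n) ℝ)) = algebraMap ℂ (Matrix (Fin n) (Fin n) ℂ) (c : ℂ) := by
  rw [cm_smul, cm_one, Algebra.algebraMap_eq_smul_one]

lemma cm_entry (A : Matrix (Fin n) (Fin n) ℝ) (i j : Fin n) : cm A i j = (A i j : ℂ) := rfl

/-- entrywise order: powers preserve nonneg-dominance -/
lemma pow_entry_mono {A B : Matrix (Fin n) (Fin n) ℝ}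
    (hA : ∀ i j, 0 ≤ A i j) (hAB : ∀ i j, A i j ≤ B i j) (k : ℕ) :
    ∀ i j, 0 ≤ (A ^ k) i j ∧ (A ^ k) i j ≤ (B ^ k) i j := by
  induction k with
  | zero => intro i j; by_cases h : i = j <;> simp [h, Matrix.one_apply]
  | succ k ih =>
      intro i j
      rw [pow_succ, pow_succ, Matrix.mul_apply, Matrix.mul_apply]
      constructor
      · exact Finset.sum_nonneg fun l _ => mul_nonneg (ih i l).1 (hA l j)
      · refine Finset.sum_le_sum fun l _ => mul_le_mul (ih i l).2 (hAB l j) (hA l j) ?_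
        exact le_trans (ih i l).1 (ih i l).2

end PF
noncomputable section PF
variable {n : ℕ}

lemma entry_nnnorm_le (M : Matrix (Fin n) (Fin n) ℂ) (i j : Fin n) :
    ‖M i j‖₊ ≤ ‖M‖₊ := by
  rw [Matrix.linfty_opNNNorm_def]
  refine le_trans ?_ (Finset.le_sup (f := fun i => ∑ j, ‖M i j‖₊) (Finset.mem_univ i))
  exact Finset.single_le_sum (f := fun j => ‖M i j‖₊) (fun k _ => zero_le) (Finset.mem_univ j)

lemma entry_norm_le (M : Matrix (Fin n) (Fin n) ℂ) (i j : Fin n) :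
    ‖M i j‖ ≤ ‖M‖ := entry_nnnorm_le M i j

/-- norm monotone under entrywise complex-norm domination by nonneg real entries -/
lemma nnnorm_le_of_entry_le {M : Matrix (Fin n) (Fin n) ℂ} {N : Matrix (Fin n) (Fin n) ℂ}
    (h : ∀ i j, ‖M i j‖₊ ≤ ‖N i j‖₊) : ‖M‖₊ ≤ ‖N‖₊ := by
  rw [Matrix.linfty_opNNNorm_def, Matrix.linfty_opNNNorm_def]
  exact Finset.sup_mono_fun fun i _ => Finset.sum_le_sum fun j _ => h i j



section PF2
variable {n : ℕ}

lemma real_nnnorm_mono {a b : ℝ} (ha : 0 ≤ a) (hab : a ≤ b) : ‖a‖₊ ≤ ‖b‖₊ := by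
  rw [← NNReal.coe_le_coe]
  simp only [coe_nnnorm, Real.norm_eq_abs]
  exact abs_le_abs hab (neg_le_of_neg_le (by linarith))

open Filter in
lemma specRad_mono {A B : Matrix (Fin n) (Fin n) ℝ} (hA : ∀ i j, 0 ≤ A i j)
    (hAB : ∀ i j, A i j ≤ B i j) :
    spectralRadius ℂ (A.map (algebraMap ℝ ℂ)) ≤ spectralRadius ℂ (B.map (algebraMap ℝ ℂ)) := by
  have key : ∀ k : ℕ, ‖(A.map (algebraMap ℝ ℂ)) ^ k‖₊ ≤ ‖(B.map (algebraMap ℝ ℂ)) ^ k‖₊ := by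
    intro k
    rw [show A.map (algebraMap ℝ ℂ) = (algebraMap ℝ ℂ).mapMatrix A from rfl,
      show B.map (algebraMap ℝ ℂ) = (algebraMap ℝ ℂ).mapMatrix B from rfl,
      ← _root_.map_pow, ← _root_.map_pow]
    apply nnnorm_le_of_entry_le
    intro i j
    have h := pow_entry_mono hA hAB k i j
    show ‖((A ^ k) i j : ℂ)‖₊ ≤ ‖((B ^ k) i j : ℂ)‖₊
    rw [Complex.nnnorm_real, Complex.nnnorm_real]
    exact real_nnnorm_mono h.1 h.2
  refine le_of_tendsto_of_tendsto'
    (spectrum.pow_nnnorm_pow_one_div_tendsto_nhds_spectralRadius (A.map (algebraMap ℝ ℂ)))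
    (spectrum.pow_nnnorm_pow_one_div_tendsto_nhds_spectralRadius (B.map (algebraMap ℝ ℂ)))
    fun k => ?_
  exact ENNReal.rpow_le_rpow (by exact_mod_cast key k) (by positivity)

end PF2

section Unit
variable {A : Type*} [NormedRing A] [NormedAlgebra ℂ A] [CompleteSpace A]

open spectrum

lemma one_le_dist_mul_norm_resolvent {a : A} {z w : ℂ} (hz : z ∈ resolventSet ℂ a)
    (hw : w ∈ spectrum ℂ a) : 1 ≤ ‖w - z‖ * ‖resolvent a z‖ := by
  by_contra h
  push_neg at h
  have hlt : ‖(z - w) • resolvent a z‖ < 1 := by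
    rw [norm_smul]
    calc ‖z - w‖ * ‖resolvent a z‖ = ‖w - z‖ * ‖resolvent a z‖ := by rw [norm_sub_rev]
    _ < 1 := h
  have hu1 : IsUnit (1 - (z - w) • resolvent a z) := (Units.oneSub _ hlt).isUnit
  have hzu : IsUnit (algebraMap ℂ A z - a) := hz
  have hmul : (algebraMap ℂ A z - a) * resolvent a z = 1 := by
    rw [resolvent_eq hz]
    exact (IsUnit.unit hz).mul_inv
  have key : algebraMap ℂ A w - a = (algebraMap ℂ A z - a) * (1 - (z - w) • resolvent a z) := by
    rw [mul_sub, mul_one, mul_smul_comm, hmul,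
      Algebra.algebraMap_eq_smul_one w, Algebra.algebraMap_eq_smul_one z, sub_smul]
    abel
  have : IsUnit (algebraMap ℂ A w - a) := key ▸ hzu.mul hu1
  exact (spectrum.notMem_iff.mpr this) hw

lemma one_sub_mul_geom {R : Type*} [Ring R] (w : R) (N : ℕ) :
    (1 - w) * ∑ k ∈ Finset.range N, w ^ k = 1 - w ^ N := by
  induction N with
  | zero => simp
  | succ N ih =>
      rw [Finset.sum_range_succ, mul_add, ih, sub_mul, one_mul, pow_succ']
      abel

end Unit
open scoped NNReal ENNReal

noncomputable section RES
variable {n : ℕ}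

lemma S_identity (B : Matrix (Fin n) (Fin n) ℂ) {z : ℂ} (hz : z ≠ 0) (N : ℕ) :
    (algebraMap ℂ (Matrix (Fin n) (Fin n) ℂ) z - B) *
      (∑ k ∈ Finset.range N, (z ^ (k+1))⁻¹ • B ^ k) = 1 - (z ^ N)⁻¹ • B ^ N := by
  set w : Matrix (Fin n) (Fin n) ℂ := z⁻¹ • B with hw
  have h1 : (∑ k ∈ Finset.range N, (z ^ (k+1))⁻¹ • B ^ k)
      = z⁻¹ • ∑ k ∈ Finset.range N, w ^ k := by
    rw [Finset.smul_sum]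
    refine Finset.sum_congr rfl fun k _ => ?_
    rw [hw, smul_pow, smul_smul, ← pow_succ', inv_pow]
  have h2 : algebraMap ℂ (Matrix (Fin n) (Fin n) ℂ) z - B = z • (1 - w) := by
    rw [smul_sub, hw, smul_smul, mul_inv_cancel₀ hz, one_smul,
      Algebra.algebraMap_eq_smul_one]
  rw [h1, h2, smul_mul_smul_comm, mul_inv_cancel₀ hz, one_smul, one_sub_mul_geom,
    hw, smul_pow, inv_pow]

lemma eventually_pow_nnnorm_le {B : Matrix (Fin n) (Fin n) ℂ} {c : ℝ≥0}
    (h : spectralRadius ℂ B < c) : ∀ᶠ N in atTop, ‖B ^ N‖₊ ≤ c ^ N := by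
  have hg := spectrum.pow_nnnorm_pow_one_div_tendsto_nhds_spectralRadius B
  have hev : ∀ᶠ (N : ℕ) in atTop, (‖B ^ N‖₊ : ℝ≥0∞) ^ (1 / (N:ℝ)) < (c : ℝ≥0∞) :=
    hg.eventually_lt_const h
  filter_upwards [hev, eventually_ge_atTop 1] with N hN hN1
  have hN0 : (N : ℝ) ≠ 0 := by positivity
  have : ((‖B ^ N‖₊ : ℝ≥0∞) ^ (1 / (N:ℝ))) ^ (N : ℕ) ≤ (c : ℝ≥0∞) ^ (N : ℕ) :=
    pow_le_pow_left' hN.le N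
  rw [← ENNReal.rpow_natCast ((‖B ^ N‖₊ : ℝ≥0∞) ^ (1 / (N:ℝ))), ← ENNReal.rpow_mul,
    one_div, inv_mul_cancel₀ hN0, ENNReal.rpow_one] at this
  exact_mod_cast this

lemma tendsto_S (B : Matrix (Fin n) (Fin n) ℂ) {z : ℂ} (hz : spectralRadius ℂ B < ‖z‖₊) :
    Tendsto (fun N => ∑ k ∈ Finset.range N, (z ^ (k+1))⁻¹ • B ^ k) atTop
      (𝓝 (resolvent B z)) := by
  have hzres : z ∈ resolventSet ℂ B := spectrum.mem_resolventSet_of_spectralRadius_lt hz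
  have hz0 : z ≠ 0 := by
    intro h0
    rw [h0] at hz
    simp at hz
  have hzu : IsUnit (algebraMap ℂ (Matrix (Fin n) (Fin n) ℂ) z - B) := hzres
  have hRmul : resolvent B z * (algebraMap ℂ (Matrix (Fin n) (Fin n) ℂ) z - B) = 1 := by
    rw [spectrum.resolvent_eq hzres]
    exact (IsUnit.unit hzres).inv_mul
  set R := resolvent B z with hR
  have hSN : ∀ N, (∑ k ∈ Finset.range N, (z ^ (k+1))⁻¹ • B ^ k)
      = R - (z ^ N)⁻¹ • (R * B ^ N) := by
    intro N
    have := congrArg (fun M => R * M) (S_identity B hz0 N)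
    rw [← mul_assoc, hRmul, one_mul] at this
    rw [this, mul_sub, mul_one, mul_smul_comm]
  -- obtain geometric bound
  obtain ⟨c, hc1, hc2⟩ := ENNReal.lt_iff_exists_nnreal_btwn.mp hz
  have hev := eventually_pow_nnnorm_le (B := B) hc1
  have hcz : (c : ℝ) < ‖z‖ := by exact_mod_cast hc2
  have hz0' : (0:ℝ) < ‖z‖ := lt_of_le_of_lt c.coe_nonneg hcz
  have hrat : (c : ℝ) / ‖z‖ < 1 := (div_lt_one hz0').mpr hcz
  have hrat0 : (0:ℝ) ≤ (c:ℝ) / ‖z‖ := by positivity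
  have hgeo : Tendsto (fun N : ℕ => ‖R‖ * ((c:ℝ) / ‖z‖) ^ N) atTop (𝓝 0) := by
    rw [show (0:ℝ) = ‖R‖ * 0 by ring]
    exact (tendsto_pow_atTop_nhds_zero_of_lt_one hrat0 hrat).const_mul _
  refine (tendsto_iff_norm_sub_tendsto_zero).mpr ?_
  refine squeeze_zero_norm' ?_ hgeo
  filter_upwards [hev] with N hN
  rw [hSN N]
  have : ‖R - (z ^ N)⁻¹ • (R * B ^ N) - R‖ = ‖z‖⁻¹ ^ N * ‖R * B ^ N‖ := by
    rw [show R - (z ^ N)⁻¹ • (R * B ^ N) - R = -((z ^ N)⁻¹ • (R * B ^ N)) by abel,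
      norm_neg, norm_smul, norm_inv, norm_pow, inv_pow]
  rw [norm_norm, this]
  have hBN : ‖B ^ N‖ ≤ (c:ℝ) ^ N := by exact_mod_cast hN
  calc ‖z‖⁻¹ ^ N * ‖R * B ^ N‖ ≤ ‖z‖⁻¹ ^ N * (‖R‖ * ‖B ^ N‖) := by
        apply mul_le_mul_of_nonneg_left (norm_mul_le _ _) (by positivity)
    _ ≤ ‖z‖⁻¹ ^ N * (‖R‖ * (c:ℝ) ^ N) := by
        apply mul_le_mul_of_nonneg_left (mul_le_mul_of_nonneg_left hBN (norm_nonneg _)) (by positivity)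
    _ = ‖R‖ * ((c:ℝ) / ‖z‖) ^ N := by
        rw [div_pow, div_eq_mul_inv, ← inv_pow]
        ring

end RES
section RES2
variable {n : ℕ}

lemma entry_tendsto {f : ℕ → Matrix (Fin n) (Fin n) ℂ} {M : Matrix (Fin n) (Fin n) ℂ}
    (h : Tendsto f atTop (𝓝 M)) (i j : Fin n) :
    Tendsto (fun N => f N i j) atTop (𝓝 (M i j)) := by
  rw [tendsto_iff_norm_sub_tendsto_zero]
  replace h := (tendsto_iff_norm_sub_tendsto_zero).mp h
  refine squeeze_zero_norm (fun N => ?_) h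
  rw [norm_norm]
  calc ‖f N i j - M i j‖ = ‖(f N - M) i j‖ := by rw [Matrix.sub_apply]
    _ ≤ ‖f N - M‖ := entry_norm_le _ i j

lemma resolvent_entry_le {B₀ : Matrix (Fin n) (Fin n) ℝ} (hB : ∀ i j, 0 ≤ B₀ i j)
    {z : ℂ} (hz : spectralRadius ℂ (cm B₀) < ‖z‖₊) (i j : Fin n) :
    ‖resolvent (cm B₀) z i j‖ ≤ ‖resolvent (cm B₀) ((‖z‖ : ℝ) : ℂ) i j‖ := by
  set B := cm B₀ with hBdef
  set t : ℂ := ((‖z‖ : ℝ) : ℂ) with ht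
  have hnt : ‖t‖₊ = ‖z‖₊ := by
    rw [ht]
    ext
    simp [Complex.norm_real]
  have hzt : spectralRadius ℂ B < ‖t‖₊ := by rw [hnt]; exact hz
  have hpow : ∀ k, (B ^ k) i j = (((B₀ ^ k) i j : ℝ) : ℂ) := by
    intro k
    rw [hBdef, ← cm_pow]
    rfl
  have hpos : ∀ k, 0 ≤ (B₀ ^ k) i j := fun k => (pow_entry_mono hB (fun _ _ => le_rfl) k i j).1
  have e1 := entry_tendsto (tendsto_S B hz) i j
  have e2 := entry_tendsto (tendsto_S B hzt) i j
  refine le_of_tendsto_of_tendsto' (e1.norm) (e2.norm) fun N => ?_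
  have hSz : (∑ k ∈ Finset.range N, (z ^ (k+1))⁻¹ • B ^ k) i j
      = ∑ k ∈ Finset.range N, (z ^ (k+1))⁻¹ * (((B₀ ^ k) i j : ℝ) : ℂ) := by
    rw [Matrix.sum_apply]
    exact Finset.sum_congr rfl fun k _ => by rw [Matrix.smul_apply, hpow k, smul_eq_mul]
  have hSt : (∑ k ∈ Finset.range N, (t ^ (k+1))⁻¹ • B ^ k) i j
      = ((∑ k ∈ Finset.range N, (‖z‖ ^ (k+1))⁻¹ * ((B₀ ^ k) i j) : ℝ) : ℂ) := by
    rw [Matrix.sum_apply]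
    push_cast
    exact Finset.sum_congr rfl fun k _ => by rw [Matrix.smul_apply, hpow k, smul_eq_mul, ht]
  rw [hSz, hSt]
  have hsum_nonneg : 0 ≤ ∑ k ∈ Finset.range N, (‖z‖ ^ (k+1))⁻¹ * ((B₀ ^ k) i j) :=
    Finset.sum_nonneg fun k _ => mul_nonneg (by positivity) (hpos k)
  rw [Complex.norm_real, Real.norm_eq_abs, abs_of_nonneg hsum_nonneg]
  calc ‖∑ k ∈ Finset.range N, (z ^ (k+1))⁻¹ * (((B₀ ^ k) i j : ℝ) : ℂ)‖
      ≤ ∑ k ∈ Finset.range N, ‖(z ^ (k+1))⁻¹ * (((B₀ ^ k) i j : ℝ) : ℂ)‖ := norm_sum_le _ _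
    _ = ∑ k ∈ Finset.range N, (‖z‖ ^ (k+1))⁻¹ * ((B₀ ^ k) i j) := by
        refine Finset.sum_congr rfl fun k _ => ?_
        rw [norm_mul, norm_inv, norm_pow, Complex.norm_real, Real.norm_eq_abs,
          abs_of_nonneg (hpos k)]

lemma resolvent_nnnorm_le {B₀ : Matrix (Fin n) (Fin n) ℝ} (hB : ∀ i j, 0 ≤ B₀ i j)
    {z : ℂ} (hz : spectralRadius ℂ (cm B₀) < ‖z‖₊) :
    ‖resolvent (cm B₀) z‖ ≤ ‖resolvent (cm B₀) ((‖z‖ : ℝ) : ℂ)‖ := by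
  have h : ‖resolvent (cm B₀) z‖₊ ≤ ‖resolvent (cm B₀) ((‖z‖ : ℝ) : ℂ)‖₊ := by
    apply nnnorm_le_of_entry_le
    intro i j
    have := resolvent_entry_le hB hz i j
    rwa [← NNReal.coe_le_coe, coe_nnnorm, coe_nnnorm]
  exact_mod_cast h

end RES2
section PF1
variable {n : ℕ}

lemma specRad_ne_top (hn : 0 < n) (B₀ : Matrix (Fin n) (Fin n) ℝ) :
    spectralRadius ℂ (cm B₀) ≠ ⊤ := by
  haveI : Nonempty (Fin n) := ⟨⟨0, hn⟩⟩
  exact ne_top_of_le_ne_top ENNReal.coe_ne_top (spectrum.spectralRadius_le_nnnorm (𝕜 := ℂ) (cm B₀))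

lemma pf1 (hn : 0 < n) {B₀ : Matrix (Fin n) (Fin n) ℝ} (hB : ∀ i j, 0 ≤ B₀ i j) :
    (((spectralRadius ℂ (cm B₀)).toReal : ℝ) : ℂ) ∈ spectrum ℂ (cm B₀) := by
  haveI : Nonempty (Fin n) := ⟨⟨0, hn⟩⟩
  haveI : NeZero n := ⟨hn.ne'⟩
  set B := cm B₀ with hBdef
  set r : ℝ := (spectralRadius ℂ B).toReal with hr
  have hne : spectralRadius ℂ B ≠ ⊤ := specRad_ne_top hn B₀
  have hcoe : spectralRadius ℂ B = ENNReal.ofReal r := (ENNReal.ofReal_toReal hne).symm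
  have hr0 : 0 ≤ r := ENNReal.toReal_nonneg
  by_contra hmem
  obtain ⟨lam, hlam, hlamnorm⟩ := spectrum.exists_nnnorm_eq_spectralRadius (a := B)
  have hlamnorm' : ‖lam‖ = r := by
    rw [hr, ← hlamnorm]
    simp
  have hrpos : 0 < r := by
    rcases hr0.lt_or_eq with h | h
    · exact h
    · exfalso
      apply hmem
      have hlam0 : lam = 0 := by
        rw [← norm_eq_zero, hlamnorm', ← h]
      have heq : ((r:ℝ):ℂ) = lam := by
        rw [hlam0, ← h]
        norm_num
      rw [heq]
      exact hlam
  have hρres : ((r:ℝ):ℂ) ∈ resolventSet ℂ B := by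
    rw [spectrum.mem_resolventSet_iff]
    exact spectrum.notMem_iff.mp hmem
  have hcont : ContinuousAt (fun t : ℝ => ‖resolvent B ((t:ℝ):ℂ)‖) r := by
    have h1 : ContinuousAt (resolvent B) ((r:ℝ):ℂ) :=
      (spectrum.hasDerivAt_resolvent hρres).continuousAt
    exact (h1.comp Complex.continuous_ofReal.continuousAt).norm
  have key : ∀ ε : ℝ, 0 < ε → 1 ≤ ε * ‖resolvent B (((r+ε):ℝ):ℂ)‖ := by
    intro ε hε
    set z : ℂ := (((r+ε)/r : ℝ):ℂ) * lam with hzdef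
    have hznorm : ‖z‖ = r + ε := by
      rw [hzdef, norm_mul, Complex.norm_real, Real.norm_eq_abs,
        abs_of_pos (by positivity), hlamnorm']
      field_simp
    have hzrad : spectralRadius ℂ B < ‖z‖₊ := by
      rw [hcoe, show ((‖z‖₊ : ℝ≥0∞)) = ENNReal.ofReal ‖z‖ from (ENNReal.ofReal_eq_coe_nnreal (norm_nonneg z)).symm, hznorm]
      exact (ENNReal.ofReal_lt_ofReal_iff (by positivity)).mpr (by linarith)
    have hzres : z ∈ resolventSet ℂ B := spectrum.mem_resolventSet_of_spectralRadius_lt hzrad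
    have hdist : ‖lam - z‖ = ε := by
      have h2 : lam - z = ((-(ε/r) : ℝ) : ℂ) * lam := by
        rw [hzdef]
        push_cast
        have hr' : (r:ℂ) ≠ 0 := by exact_mod_cast hrpos.ne'
        field_simp
        ring
      rw [h2, norm_mul, Complex.norm_real, Real.norm_eq_abs, abs_neg,
        abs_of_pos (by positivity), hlamnorm']
      field_simp
    have hres_le := resolvent_nnnorm_le hB hzrad
    calc (1:ℝ) ≤ ‖lam - z‖ * ‖resolvent B z‖ := one_le_dist_mul_norm_resolvent hzres hlam
      _ = ε * ‖resolvent B z‖ := by rw [hdist]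
      _ ≤ ε * ‖resolvent B ((‖z‖:ℝ):ℂ)‖ := mul_le_mul_of_nonneg_left hres_le hε.le
      _ = ε * ‖resolvent B (((r+ε):ℝ):ℂ)‖ := by rw [hznorm]
  have htend : Tendsto (fun ε : ℝ => ε * ‖resolvent B (((r+ε):ℝ):ℂ)‖) (𝓝[>] 0) (𝓝 0) := by
    have h2 : Tendsto (fun ε : ℝ => r + ε) (𝓝 0) (𝓝 r) := by
      simpa using (tendsto_const_nhds (x := r)).add (tendsto_id (x := 𝓝 (0:ℝ)))
    have h3 : Tendsto (fun ε : ℝ => ‖resolvent B (((r+ε):ℝ):ℂ)‖) (𝓝 0) (𝓝 ‖resolvent B ((r:ℝ):ℂ)‖) :=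
      (hcont.tendsto.comp h2)
    have h4 : Tendsto (fun ε : ℝ => ε * ‖resolvent B (((r+ε):ℝ):ℂ)‖) (𝓝 0)
        (𝓝 (0 * ‖resolvent B ((r:ℝ):ℂ)‖)) := tendsto_id.mul h3
    rw [zero_mul] at h4
    exact h4.mono_left nhdsWithin_le_nhds
  have hcontra : (1:ℝ) ≤ 0 :=
    ge_of_tendsto htend (eventually_nhdsWithin_of_forall fun ε hε => key ε hε)
  linarith

end PF1
section ClaimA
variable {n : ℕ}

noncomputable def sabsc (M : Matrix (Fin n) (Fin n) ℝ) : ℝ :=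
  sSup {x : ℝ | ∃ z ∈ spectrum ℂ (M.map (algebraMap ℝ ℂ)), x = z.re}

lemma spec_translate (M : Matrix (Fin n) (Fin n) ℝ) (c : ℝ) :
    spectrum ℂ (cm (M + c • 1)) = (fun z => (c:ℂ) + z) '' spectrum ℂ (cm M) := by
  rw [cm_add, cm_algebraMap, add_comm, ← spectrum.singleton_add_eq]
  ext z
  simp [Set.mem_add, Set.image, eq_comm]

lemma specRad_mem_le {M : Matrix (Fin n) (Fin n) ℂ} {z : ℂ} (hz : z ∈ spectrum ℂ M) :
    (‖z‖₊ : ℝ≥0∞) ≤ spectralRadius ℂ M := le_iSup₂ (f := fun k (_ : k ∈ spectrum ℂ M) => (‖k‖₊ : ℝ≥0∞)) z hz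

lemma sabsc_spec (hn : 0 < n) {M : Matrix (Fin n) (Fin n) ℝ} {c : ℝ}
    (hnn : ∀ i j, 0 ≤ (M + c • 1) i j) :
    ((sabsc M : ℝ) : ℂ) ∈ spectrum ℂ (cm M) ∧
    sabsc M = (spectralRadius ℂ (cm (M + c • 1))).toReal - c ∧
    BddAbove {x : ℝ | ∃ z ∈ spectrum ℂ (cm M), x = z.re} := by
  haveI : Nonempty (Fin n) := ⟨⟨0, hn⟩⟩
  haveI : NeZero n := ⟨hn.ne'⟩
  set A := M + c • 1 with hA
  set rA : ℝ := (spectralRadius ℂ (cm A)).toReal with hrA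
  have hne : spectralRadius ℂ (cm A) ≠ ⊤ := specRad_ne_top hn A
  have hmemA : ((rA : ℝ) : ℂ) ∈ spectrum ℂ (cm A) := pf1 hn hnn
  have htrans := spec_translate M c
  -- the witness in spectrum of cm M
  obtain ⟨w, hw, hwc⟩ : ∃ w ∈ spectrum ℂ (cm M), (c:ℂ) + w = (rA:ℂ) := by
    have := htrans ▸ hmemA
    obtain ⟨w, hw, hwc⟩ := this
    exact ⟨w, hw, hwc⟩
  have hwval : w = (((rA - c : ℝ)) : ℂ) := by
    push_cast
    linear_combination hwc
  -- upper bound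
  have hub : ∀ x ∈ {x : ℝ | ∃ z ∈ spectrum ℂ (cm M), x = z.re}, x ≤ rA - c := by
    rintro x ⟨z, hz, rfl⟩
    have hmem2 : (c:ℂ) + z ∈ spectrum ℂ (cm A) := htrans ▸ ⟨z, hz, rfl⟩
    have h1 : (‖(c:ℂ) + z‖₊ : ℝ≥0∞) ≤ spectralRadius ℂ (cm A) := specRad_mem_le hmem2
    have h2 : ‖(c:ℂ) + z‖ ≤ rA := by
      have := ENNReal.toReal_mono hne h1
      simpa using this
    have h3 : c + z.re ≤ ‖(c:ℂ) + z‖ := by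
      have := Complex.re_le_norm ((c:ℂ) + z)
      simpa [Complex.add_re] using this
    linarith
  have hmemE : rA - c ∈ {x : ℝ | ∃ z ∈ spectrum ℂ (cm M), x = z.re} := by
    refine ⟨w, hw, ?_⟩
    rw [hwval]
    simp
  have hbdd : BddAbove {x : ℝ | ∃ z ∈ spectrum ℂ (cm M), x = z.re} := ⟨rA - c, hub⟩
  have heq : sabsc M = rA - c :=
    le_antisymm (csSup_le ⟨rA - c, hmemE⟩ hub) (le_csSup hbdd hmemE)
  refine ⟨?_, heq, hbdd⟩
  rw [heq, ← hwval]
  exact hw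

end ClaimA
section Steps
variable {n : ℕ}

lemma shift_nonneg {T : Matrix (Fin n) (Fin n) ℝ} (hT : ∀ i j, 0 ≤ T i j) {e : Fin n → ℝ} {c : ℝ}
    (hec : ∀ i, e i ≤ c) : ∀ i j, 0 ≤ (T - Matrix.diagonal e + c • 1) i j := by
  intro i j
  rcases eq_or_ne i j with rfl | hij
  · have := hT i i; have := hec i
    simp only [Matrix.add_apply, Matrix.sub_apply, Matrix.smul_apply, Matrix.diagonal_apply_eq,
      Matrix.one_apply_eq, smul_eq_mul, mul_one]
    linarith
  · simp only [Matrix.add_apply, Matrix.sub_apply, Matrix.smul_apply,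
      Matrix.diagonal_apply_ne _ hij, Matrix.one_apply_ne hij, smul_eq_mul, mul_zero,
      sub_zero, add_zero]
    exact hT i j

lemma not_isUnit_of_mul {X Y : Matrix (Fin n) (Fin n) ℂ} (h : ¬ IsUnit (X * Y))
    (hY : IsUnit Y) : ¬ IsUnit X := fun hX => h (hX.mul hY)

lemma isUnit_cm_diagonal {v : Fin n → ℝ} (hv : ∀ i, v i ≠ 0) :
    IsUnit (cm (Matrix.diagonal v)) := by
  have hmap : cm (Matrix.diagonal v) = Matrix.diagonal (fun i => (v i : ℂ)) := by
    rw [cm]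
    exact Matrix.diagonal_map (by simp)
  rw [hmap, Matrix.isUnit_iff_isUnit_det, Matrix.det_diagonal]
  rw [isUnit_iff_ne_zero]
  exact Finset.prod_ne_zero_iff.mpr fun i _ => by exact_mod_cast hv i

lemma one_mem_Gs {T : Matrix (Fin n) (Fin n) ℝ} {d : Fin n → ℝ} {s : ℝ}
    (hs0 : ∀ i, 0 < d i + s)
    (hmem : ((s:ℝ):ℂ) ∈ spectrum ℂ (cm (T - Matrix.diagonal d))) :
    (1:ℂ) ∈ spectrum ℂ (cm (T * Matrix.diagonal (fun i => (d i + s)⁻¹))) := by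
  set v : Fin n → ℝ := fun i => d i + s with hv
  set Ds : Matrix (Fin n) (Fin n) ℝ := Matrix.diagonal v with hDs
  set Gs : Matrix (Fin n) (Fin n) ℝ := T * Matrix.diagonal (fun i => (v i)⁻¹) with hGs
  have h1 : ¬ IsUnit (algebraMap ℂ (Matrix (Fin n) (Fin n) ℂ) (s:ℂ)
      - cm (T - Matrix.diagonal d)) := spectrum.mem_iff.mp hmem
  have hm : (s • 1 - (T - Matrix.diagonal d) : Matrix (Fin n) (Fin n) ℝ) = Ds - T := by
    ext i j
    rcases eq_or_ne i j with rfl | hij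
    · simp only [Matrix.sub_apply, Matrix.smul_apply, Matrix.one_apply_eq, hDs,
        Matrix.diagonal_apply_eq, smul_eq_mul, mul_one, hv]
      ring
    · simp [hDs, Matrix.diagonal_apply_ne _ hij, Matrix.one_apply_ne hij]
  have h2 : algebraMap ℂ (Matrix (Fin n) (Fin n) ℂ) (s:ℂ) - cm (T - Matrix.diagonal d)
      = cm (Ds - T) := by
    rw [← hm]
    rw [cm_sub (s • 1), cm_sub T, cm_algebraMap]
  have hDsT : Ds - T = (1 - Gs) * Ds := by
    rw [sub_mul, one_mul, hGs, Matrix.mul_assoc, Matrix.diagonal_mul_diagonal]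
    have hone : Matrix.diagonal (fun i => (v i)⁻¹ * v i) = (1 : Matrix (Fin n) (Fin n) ℝ) := by
      have h' : (fun i => (v i)⁻¹ * v i) = fun _ => (1:ℝ) :=
        funext fun i => inv_mul_cancel₀ (hs0 i).ne'
      rw [h', Matrix.diagonal_one]
    rw [hone, Matrix.mul_one]
  rw [h2, hDsT, cm_mul] at h1
  have h3 : ¬ IsUnit (cm (1 - Gs)) :=
    not_isUnit_of_mul h1 (isUnit_cm_diagonal fun i => (hs0 i).ne')
  rw [spectrum.mem_iff]
  intro hu
  apply h3
  rw [cm_sub, cm_one]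
  have hone' : algebraMap ℂ (Matrix (Fin n) (Fin n) ℂ) 1 = (1 : Matrix (Fin n) (Fin n) ℂ) :=
    map_one _
  rwa [hone'] at hu

end Steps
section Steps2
variable {n : ℕ}

lemma smul_one_eq_diag (r : ℝ) :
    (r • (1 : Matrix (Fin n) (Fin n) ℝ)) = Matrix.diagonal (fun _ => r) := by
  ext i j
  rcases eq_or_ne i j with rfl | hij
  · simp [Matrix.one_apply_eq, Matrix.diagonal_apply_eq]
  · simp [Matrix.one_apply_ne hij, Matrix.diagonal_apply_ne _ hij]

lemma zero_mem_shift {T : Matrix (Fin n) (Fin n) ℝ} {d : Fin n → ℝ} (hd : ∀ i, 0 < d i) {r : ℝ}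
    (hmem : ((r:ℝ):ℂ) ∈ spectrum ℂ (cm (T * Matrix.diagonal (fun i => (d i)⁻¹)))) :
    ((0:ℝ):ℂ) ∈ spectrum ℂ (cm (T - Matrix.diagonal (fun i => r * d i))) := by
  set G : Matrix (Fin n) (Fin n) ℝ := T * Matrix.diagonal (fun i => (d i)⁻¹) with hG
  have h1 : ¬ IsUnit (algebraMap ℂ (Matrix (Fin n) (Fin n) ℂ) (r:ℂ) - cm G) :=
    spectrum.mem_iff.mp hmem
  have hI : (r • (1 : Matrix (Fin n) (Fin n) ℝ) - G)
      = (Matrix.diagonal (fun i => r * d i) - T) * Matrix.diagonal (fun i => (d i)⁻¹) := by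
    rw [sub_mul, Matrix.diagonal_mul_diagonal, smul_one_eq_diag]
    congr 1
    ext i j
    rcases eq_or_ne i j with rfl | hij
    · rw [Matrix.diagonal_apply_eq, Matrix.diagonal_apply_eq]
      rw [mul_inv_cancel_right₀ (hd i).ne']
    · rw [Matrix.diagonal_apply_ne _ hij, Matrix.diagonal_apply_ne _ hij]
  have h2 : algebraMap ℂ (Matrix (Fin n) (Fin n) ℂ) (r:ℂ) - cm G
      = cm (Matrix.diagonal (fun i => r * d i) - T) * cm (Matrix.diagonal (fun i => (d i)⁻¹)) := by
    rw [← cm_mul, ← hI, cm_sub (r • 1), cm_algebraMap]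
  rw [h2] at h1
  have h3 : ¬ IsUnit (cm (Matrix.diagonal (fun i => r * d i) - T)) :=
    not_isUnit_of_mul h1 (isUnit_cm_diagonal fun i => inv_ne_zero (hd i).ne')
  rw [spectrum.mem_iff]
  intro hu
  apply h3
  have hz : algebraMap ℂ (Matrix (Fin n) (Fin n) ℂ) ((0:ℝ):ℂ) = 0 := by
    simp
  rw [hz, zero_sub] at hu
  have hneg : -cm (T - Matrix.diagonal (fun i => r * d i))
      = cm (Matrix.diagonal (fun i => r * d i) - T) := by
    rw [cm_sub, cm_sub, neg_sub]
  rw [hneg] at hu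
  exact hu

lemma toReal_coe_norm {x : ℝ} (hx : 0 ≤ x) :
    ((‖((x:ℝ):ℂ)‖₊ : ℝ≥0∞)).toReal = x := by
  rw [Complex.nnnorm_real]
  simp [Real.nnnorm_of_nonneg hx]

lemma mem_le_toReal {M : Matrix (Fin n) (Fin n) ℂ} {x : ℝ} (hx : 0 ≤ x)
    (h : ((x:ℝ):ℂ) ∈ spectrum ℂ M) (hfin : spectralRadius ℂ M ≠ ⊤) :
    x ≤ (spectralRadius ℂ M).toReal := by
  have h2 := ENNReal.toReal_mono hfin (specRad_mem_le h)
  rwa [toReal_coe_norm hx] at h2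

end Steps2
section MainSteps
variable {n : ℕ} {T : Matrix (Fin n) (Fin n) ℝ} {d : Fin n → ℝ}

lemma step1 (hn : 0 < n) (hT : ∀ i j, 0 ≤ T i j) (hd : ∀ i, 0 < d i)
    (hs : 0 ≤ sabsc (T - Matrix.diagonal d)) :
    1 ≤ (spectralRadius ℂ (cm (T * Matrix.diagonal fun i => (d i)⁻¹))).toReal := by
  set s := sabsc (T - Matrix.diagonal d) with hsdef
  set c := ∑ i, d i with hcdef
  have hc : ∀ i, d i ≤ c := fun i =>
    Finset.single_le_sum (f := d) (fun j _ => (hd j).le) (Finset.mem_univ i)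
  obtain ⟨hmem, -, -⟩ := sabsc_spec hn (shift_nonneg hT hc)
  have hs0 : ∀ i, 0 < d i + s := fun i => by have := hd i; linarith
  have h1 := one_mem_Gs hs0 hmem
  have h2 : (1:ℝ≥0∞) ≤ spectralRadius ℂ (cm (T * Matrix.diagonal fun i => (d i + s)⁻¹)) := by
    have := specRad_mem_le h1
    simpa using this
  have h3 : spectralRadius ℂ (cm (T * Matrix.diagonal fun i => (d i + s)⁻¹))
      ≤ spectralRadius ℂ (cm (T * Matrix.diagonal fun i => (d i)⁻¹)) := by
    apply specRad_mono
    · intro i j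
      rw [Matrix.mul_diagonal]
      exact mul_nonneg (hT i j) (inv_nonneg.mpr (hs0 j).le)
    · intro i j
      rw [Matrix.mul_diagonal, Matrix.mul_diagonal]
      refine mul_le_mul_of_nonneg_left ?_ (hT i j)
      exact inv_anti₀ (hd j) (by linarith)
  have hfin := specRad_ne_top hn (T * Matrix.diagonal fun i => (d i)⁻¹)
  calc (1:ℝ) = (1:ℝ≥0∞).toReal := by simp
    _ ≤ _ := ENNReal.toReal_mono hfin (le_trans h2 h3)

lemma step3 (hn : 0 < n) (hT : ∀ i j, 0 ≤ T i j) (hd : ∀ i, 0 < d i)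
    (hs : 0 < sabsc (T - Matrix.diagonal d)) :
    1 < (spectralRadius ℂ (cm (T * Matrix.diagonal fun i => (d i)⁻¹))).toReal := by
  set s := sabsc (T - Matrix.diagonal d) with hsdef
  set c := ∑ i, d i with hcdef
  have hc : ∀ i, d i ≤ c := fun i =>
    Finset.single_le_sum (f := d) (fun j _ => (hd j).le) (Finset.mem_univ i)
  have hc0 : 0 < c := by
    have := hd ⟨0, hn⟩
    have := hc ⟨0, hn⟩
    linarith
  obtain ⟨hmem, -, -⟩ := sabsc_spec hn (shift_nonneg hT hc)
  have hs0 : ∀ i, 0 < d i + s := fun i => by have := hd i; linarith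
  have h1 := one_mem_Gs hs0 hmem
  set α : ℝ := 1 + s / c with hαdef
  have hα1 : 1 < α := by
    have h0 : 0 < s / c := div_pos hs hc0
    rw [hαdef]
    linarith
  have hα0 : (α:ℂ) ≠ 0 := by
    have : (0:ℝ) < α := by linarith
    exact_mod_cast this.ne'
  set u : ℂˣ := Units.mk0 (α:ℂ) hα0 with hu
  have h4 : ((α:ℝ):ℂ) ∈ spectrum ℂ (cm (α • (T * Matrix.diagonal fun i => (d i + s)⁻¹))) := by
    have := (spectrum.smul_mem_smul_iff (a := cm (T * Matrix.diagonal fun i => (d i + s)⁻¹))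
      (s := (1:ℂ)) (r := u)).mpr h1
    rw [cm_smul]
    have hu1 : u • (1:ℂ) = (α:ℂ) := by simp [hu, Units.smul_def]
    have hu2 : u • cm (T * Matrix.diagonal fun i => (d i + s)⁻¹)
        = (α:ℂ) • cm (T * Matrix.diagonal fun i => (d i + s)⁻¹) := by
      simp [hu, Units.smul_def]
    rw [hu1, hu2] at this
    exact this
  have h5 : spectralRadius ℂ (cm (α • (T * Matrix.diagonal fun i => (d i + s)⁻¹)))
      ≤ spectralRadius ℂ (cm (T * Matrix.diagonal fun i => (d i)⁻¹)) := by
    apply specRad_mono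
    · intro i j
      rw [Matrix.smul_apply, Matrix.mul_diagonal]
      have := mul_nonneg (hT i j) (inv_nonneg.mpr (hs0 j).le)
      have hα : (0:ℝ) ≤ α := by linarith
      rw [smul_eq_mul]
      positivity
    · intro i j
      rw [Matrix.smul_apply, Matrix.mul_diagonal, Matrix.mul_diagonal, smul_eq_mul]
      have hkey : α * (d j + s)⁻¹ ≤ (d j)⁻¹ := by
        rw [← div_eq_mul_inv, inv_eq_one_div, div_le_div_iff₀ (hs0 j) (hd j), one_mul, hαdef]
        have hcj := hc j
        have hdj := hd j
        rw [add_mul, one_mul, div_mul_eq_mul_div, ← sub_nonneg]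
        have : d j + s - (d j + s * d j / c) = s * (1 - d j / c) := by
          field_simp
          ring
        rw [this]
        have : d j / c ≤ 1 := (div_le_one hc0).mpr hcj
        nlinarith
      calc α * (T i j * (d j + s)⁻¹) = T i j * (α * (d j + s)⁻¹) := by ring
        _ ≤ T i j * (d j)⁻¹ := mul_le_mul_of_nonneg_left hkey (hT i j)
  have hfin := specRad_ne_top hn (T * Matrix.diagonal fun i => (d i)⁻¹)
  have h6 : α ≤ (spectralRadius ℂ (cm (T * Matrix.diagonal fun i => (d i)⁻¹))).toReal := by
    have h7 := ENNReal.toReal_mono hfin (le_trans (specRad_mem_le h4) h5)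
    rwa [toReal_coe_norm (by linarith : (0:ℝ) ≤ α)] at h7
  exact lt_of_lt_of_le hα1 h6

end MainSteps
section MainSteps2
variable {n : ℕ} {T : Matrix (Fin n) (Fin n) ℝ} {d : Fin n → ℝ}

lemma G_nonneg (hT : ∀ i j, 0 ≤ T i j) (hd : ∀ i, 0 < d i) :
    ∀ i j, 0 ≤ (T * Matrix.diagonal fun i => (d i)⁻¹) i j := by
  intro i j
  rw [Matrix.mul_diagonal]
  exact mul_nonneg (hT i j) (inv_nonneg.mpr (hd j).le)

lemma step2 (hn : 0 < n) (hT : ∀ i j, 0 ≤ T i j) (hd : ∀ i, 0 < d i)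
    (hr : 1 ≤ (spectralRadius ℂ (cm (T * Matrix.diagonal fun i => (d i)⁻¹))).toReal) :
    0 ≤ sabsc (T - Matrix.diagonal d) := by
  set rG := (spectralRadius ℂ (cm (T * Matrix.diagonal fun i => (d i)⁻¹))).toReal with hrGdef
  have hrG0 : 0 ≤ rG := ENNReal.toReal_nonneg
  have hmemG : ((rG:ℝ):ℂ) ∈ spectrum ℂ (cm (T * Matrix.diagonal fun i => (d i)⁻¹)) :=
    pf1 hn (G_nonneg hT hd)
  have h0 := zero_mem_shift hd hmemG
  set c : ℝ := rG * (∑ i, d i) + ∑ i, d i with hcdef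
  have hsum : ∀ i, d i ≤ ∑ i, d i := fun i =>
    Finset.single_le_sum (f := d) (fun j _ => (hd j).le) (Finset.mem_univ i)
  have hc1 : ∀ i, rG * d i ≤ c := by
    intro i
    rw [hcdef]
    have h1 : rG * d i ≤ rG * ∑ i, d i := mul_le_mul_of_nonneg_left (hsum i) hrG0
    have h2 : 0 < ∑ i, d i := lt_of_lt_of_le (hd ⟨0, hn⟩) (hsum ⟨0, hn⟩)
    linarith
  have hc2 : ∀ i, d i ≤ c := by
    intro i
    rw [hcdef]
    have h1 : 0 ≤ rG * ∑ i, d i :=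
      mul_nonneg hrG0 (le_trans (hd ⟨0, hn⟩).le (hsum ⟨0, hn⟩))
    have := hsum i
    linarith
  obtain ⟨-, heq', hbdd'⟩ := sabsc_spec hn (shift_nonneg hT hc1)
  obtain ⟨-, heq, -⟩ := sabsc_spec hn (shift_nonneg hT hc2)
  have h0le : 0 ≤ sabsc (T - Matrix.diagonal fun i => rG * d i) :=
    le_csSup hbdd' ⟨((0:ℝ):ℂ), h0, by simp⟩
  have hcomp : spectralRadius ℂ (cm ((T - Matrix.diagonal fun i => rG * d i) + c • 1))
      ≤ spectralRadius ℂ (cm (T - Matrix.diagonal d + c • 1)) := by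
    apply specRad_mono (shift_nonneg hT hc1)
    intro i j
    rcases eq_or_ne i j with rfl | hij
    · simp only [Matrix.add_apply, Matrix.sub_apply, Matrix.smul_apply,
        Matrix.diagonal_apply_eq, Matrix.one_apply_eq, smul_eq_mul, mul_one]
      have : d i ≤ rG * d i := le_mul_of_one_le_left (hd i).le hr
      linarith
    · simp [Matrix.diagonal_apply_ne _ hij, Matrix.one_apply_ne hij]
  have hfin := specRad_ne_top hn (T - Matrix.diagonal d + c • 1)
  have := ENNReal.toReal_mono hfin hcomp
  linarith [h0le, this, heq, heq']

end MainSteps2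
section MainSteps3
variable {n : ℕ} {T : Matrix (Fin n) (Fin n) ℝ} {d : Fin n → ℝ}

lemma step4 (hn : 0 < n) (hT : ∀ i j, 0 ≤ T i j) (hd : ∀ i, 0 < d i)
    (hr : 1 < (spectralRadius ℂ (cm (T * Matrix.diagonal fun i => (d i)⁻¹))).toReal) :
    0 < sabsc (T - Matrix.diagonal d) := by
  haveI : Nonempty (Fin n) := ⟨⟨0, hn⟩⟩
  set rG := (spectralRadius ℂ (cm (T * Matrix.diagonal fun i => (d i)⁻¹))).toReal with hrGdef
  have hrG0 : 0 ≤ rG := ENNReal.toReal_nonneg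
  have hmemG : ((rG:ℝ):ℂ) ∈ spectrum ℂ (cm (T * Matrix.diagonal fun i => (d i)⁻¹)) :=
    pf1 hn (G_nonneg hT hd)
  have h0 := zero_mem_shift hd hmemG
  set c : ℝ := rG * (∑ i, d i) + ∑ i, d i with hcdef
  have hsum : ∀ i, d i ≤ ∑ i, d i := fun i =>
    Finset.single_le_sum (f := d) (fun j _ => (hd j).le) (Finset.mem_univ i)
  have hsum0 : 0 < ∑ i, d i := lt_of_lt_of_le (hd ⟨0, hn⟩) (hsum ⟨0, hn⟩)
  have hc1 : ∀ i, rG * d i ≤ c := by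
    intro i
    rw [hcdef]
    have h1 : rG * d i ≤ rG * ∑ i, d i := mul_le_mul_of_nonneg_left (hsum i) hrG0
    linarith
  have hc2 : ∀ i, d i ≤ c := by
    intro i
    rw [hcdef]
    have h1 : 0 ≤ rG * ∑ i, d i := mul_nonneg hrG0 hsum0.le
    have := hsum i
    linarith
  have hc0 : 0 < c := lt_of_lt_of_le (hd ⟨0, hn⟩) (hc2 ⟨0, hn⟩)
  -- dmin and epsilon
  set dmin : ℝ := Finset.univ.inf' Finset.univ_nonempty d with hdmin
  have hdmin_le : ∀ i, dmin ≤ d i := fun i => Finset.inf'_le d (Finset.mem_univ i)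
  have hdmin_pos : 0 < dmin := by
    rw [hdmin, Finset.lt_inf'_iff]
    exact fun i _ => hd i
  set ε : ℝ := (rG - 1) * dmin with hεdef
  have hε0 : 0 < ε := mul_pos (by linarith) hdmin_pos
  -- A1 := T - diagonal (rG * d) + c • 1, nonneg
  have hnn1 := shift_nonneg hT hc1
  -- rho1 ≥ c via translation of the 0 eigenvalue
  set A1 : Matrix (Fin n) (Fin n) ℝ := T - Matrix.diagonal (fun i => rG * d i) + c • 1 with hA1
  have hfin1 := specRad_ne_top hn A1
  have hcmem : ((c:ℝ):ℂ) ∈ spectrum ℂ (cm A1) := by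
    rw [hA1, spec_translate]
    exact ⟨((0:ℝ):ℂ), h0, by simp⟩
  have hρ1c : c ≤ (spectralRadius ℂ (cm A1)).toReal := mem_le_toReal hc0.le hcmem hfin1
  set ρ1 := (spectralRadius ℂ (cm A1)).toReal with hρ1def
  -- PF1 on A1 and translation by ε
  have hmem1 : ((ρ1:ℝ):ℂ) ∈ spectrum ℂ (cm A1) := pf1 hn hnn1
  have hmem2 : ((ρ1 + ε : ℝ):ℂ) ∈ spectrum ℂ (cm (A1 + ε • 1)) := by
    rw [spec_translate]
    refine ⟨((ρ1:ℝ):ℂ), hmem1, by push_cast; ring⟩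
  -- compare A1 + ε•1 ≤ T - D + c•1 entrywise
  have hnn2 : ∀ i j, 0 ≤ (A1 + ε • 1) i j := by
    intro i j
    have := hnn1 i j
    rcases eq_or_ne i j with rfl | hij
    · simp only [Matrix.add_apply, Matrix.smul_apply, Matrix.one_apply_eq, smul_eq_mul,
        mul_one] at this ⊢
      linarith
    · simp only [Matrix.add_apply, Matrix.smul_apply, Matrix.one_apply_ne hij, smul_eq_mul,
        mul_zero, add_zero] at this ⊢
      exact this
  have hcomp : spectralRadius ℂ (cm (A1 + ε • 1))
      ≤ spectralRadius ℂ (cm (T - Matrix.diagonal d + c • 1)) := by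
    apply specRad_mono hnn2
    intro i j
    rcases eq_or_ne i j with rfl | hij
    · simp only [hA1, Matrix.add_apply, Matrix.sub_apply, Matrix.smul_apply,
        Matrix.diagonal_apply_eq, Matrix.one_apply_eq, smul_eq_mul, mul_one]
      have h1 : d i + ε ≤ rG * d i := by
        have := hdmin_le i
        have hrg1 : 0 < rG - 1 := by linarith
        have : (rG - 1) * dmin ≤ (rG - 1) * d i := mul_le_mul_of_nonneg_left this hrg1.le
        rw [hεdef]
        nlinarith
      linarith
    · simp [hA1, Matrix.diagonal_apply_ne _ hij, Matrix.one_apply_ne hij]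
  have hfin2 := specRad_ne_top hn (T - Matrix.diagonal d + c • 1)
  have hle2 : ρ1 + ε ≤ (spectralRadius ℂ (cm (T - Matrix.diagonal d + c • 1))).toReal := by
    have h1 : ρ1 + ε ≤ (spectralRadius ℂ (cm (A1 + ε • 1))).toReal :=
      mem_le_toReal (by linarith) hmem2 (specRad_ne_top hn _)
    have h2 := ENNReal.toReal_mono hfin2 hcomp
    linarith
  obtain ⟨-, heq, -⟩ := sabsc_spec hn (shift_nonneg hT hc2)
  rw [heq]
  linarith

end MainSteps3
theorem stmt12 {n : ℕ} (hn : 0 < n) (T Sig : Matrix (Fin n) (Fin n) ℝ)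
    (hT : ∀ i j, 0 ≤ T i j) (d : Fin n → ℝ) (hd : ∀ i, 0 < d i)
    (hSig : Sig = Matrix.diagonal d) (s : ℝ)
    (hs : s = sSup {x : ℝ | ∃ z ∈ spectrum ℂ ((T - Sig).map (algebraMap ℝ ℂ)), x = z.re}) :
    (0 < s ↔ 1 < specRad (T * Sig⁻¹)) ∧
    (s = 0 ↔ specRad (T * Sig⁻¹) = 1) ∧
    (s < 0 ↔ specRad (T * Sig⁻¹) < 1) := by
  subst hSig
  have hdinv : (Matrix.diagonal d)⁻¹ = Matrix.diagonal (fun i => (d i)⁻¹) := by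
    apply Matrix.inv_eq_right_inv
    rw [Matrix.diagonal_mul_diagonal]
    have h' : (fun i => d i * (d i)⁻¹) = fun _ => (1:ℝ) :=
      funext fun i => mul_inv_cancel₀ (hd i).ne'
    rw [h', Matrix.diagonal_one]
  have hs' : s = sabsc (T - Matrix.diagonal d) := hs
  have hspecRad : specRad (T * (Matrix.diagonal d)⁻¹)
      = spectralRadius ℂ (cm (T * Matrix.diagonal fun i => (d i)⁻¹)) := by
    rw [specRad, hdinv]
    rfl
  have hfin := specRad_ne_top hn (T * Matrix.diagonal fun i => (d i)⁻¹)
  set rG := (spectralRadius ℂ (cm (T * Matrix.diagonal fun i => (d i)⁻¹))).toReal with hrG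
  have hlt1 : (1 < specRad (T * (Matrix.diagonal d)⁻¹)) ↔ 1 < rG := by
    rw [hspecRad, hrG]
    rw [← ENNReal.toReal_lt_toReal ENNReal.one_ne_top hfin, ENNReal.toReal_one]
  have hlt2 : (specRad (T * (Matrix.diagonal d)⁻¹) < 1) ↔ rG < 1 := by
    rw [hspecRad, hrG]
    rw [← ENNReal.toReal_lt_toReal hfin ENNReal.one_ne_top, ENNReal.toReal_one]
  have heq1 : (specRad (T * (Matrix.diagonal d)⁻¹) = 1) ↔ rG = 1 := by
    rw [hspecRad, hrG]
    rw [← ENNReal.toReal_eq_toReal_iff' hfin ENNReal.one_ne_top, ENNReal.toReal_one]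
  rw [hs', hlt1, hlt2, heq1]
  refine ⟨⟨fun h => step3 hn hT hd h, fun h => step4 hn hT hd h⟩, ?_, ?_⟩
  · constructor
    · intro h
      have h1 : 1 ≤ rG := step1 hn hT hd h.ge
      rcases h1.lt_or_eq with h2 | h2
      · exfalso
        have := step4 hn hT hd h2
        linarith
      · exact h2.symm
    · intro h
      have h1 : 0 ≤ sabsc (T - Matrix.diagonal d) := step2 hn hT hd h.ge
      rcases h1.lt_or_eq with h2 | h2
      · exfalso
        have h3 := step3 hn hT hd h2
        rw [hrG] at h
        linarith [h3, h]
      · exact h2.symm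
  · constructor
    · intro h
      by_contra h2
      push_neg at h2
      have := step2 hn hT hd h2
      linarith
    · intro h
      by_contra h2
      push_neg at h2
      have := step1 hn hT hd h2
      linarith
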